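/- Let p : ℝ^d → ℝ^m and q : ℝ^m → ℝ^s be polynomial maps with p(0) = 0 and q(0) = 0. Then for all i ∈ {1,…,s} and j ∈ {1,…,d}, k_{q∘p}^{ij} = Σ_{l=1}^m M_p(k_q^{il}) ⧢ k_p^{lj}. -/

import Mathlib

noncomputable section

open MeasureTheory

/-- Words in the alphabet `{1,…,d}`. -/
abbrev Word (d : ℕ) := List (Fin d)

/-- `T(ℝ^d)`: the real vector space with basis the words in `{1,…,d}`. -/
abbrev Tens (d : ℕ) := Word d →₀ ℝ

namespace SigPaper

variable {d m s : ℕ}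

/-- The basis word `w` as an element of `T(ℝ^d)`. -/
def wordT (w : Word d) : Tens d := Finsupp.single w 1

/-- The shuffle product of two words. -/
def shuffleWord : Word d → Word d → Tens d
  | [], v => Finsupp.single v 1
  | u, [] => Finsupp.single u 1
  | a :: u, b :: v =>
      Finsupp.mapDomain (fun w => a :: w) (shuffleWord u (b :: v)) +
      Finsupp.mapDomain (fun w => b :: w) (shuffleWord (a :: u) v)
  termination_by u v => u.length + v.length
  decreasing_by all_goals simp +arith +decide

/-- The shuffle product `⧢` on `T(ℝ^d)`, the bilinear extension of the shuffle of words. -/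
def shuffle (x y : Tens d) : Tens d :=
  x.sum fun u a => y.sum fun v b => (a * b) • shuffleWord u v

/-- The operator appending the letter `i` at the end of every word (`T_i^+`). -/
def appendLetter (i : Fin d) (x : Tens d) : Tens d :=
  Finsupp.mapDomain (fun w => w ++ [i]) x

/-- The right half-shuffle of two words: `w ≻ (v∘i) = (w ⧢ v)∘i` (zero if the right word
is empty). -/
def halfShuffleWord (u v : Word d) : Tens d :=
  match v.getLast? with
  | none => 0
  | some i => appendLetter i (shuffleWord u v.dropLast)

/-- The right half-shuffle `≻`, extended bilinearly. -/
def halfShuffle (x y : Tens d) : Tens d :=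
  x.sum fun u a => y.sum fun v b => (a * b) • halfShuffleWord u v

/-- The letter-appending operator `T_i^+`. -/
def Tplus (i : Fin d) : Tens d → Tens d := appendLetter i

/-- `T_i^-` on a word: removes the last letter if it equals `i`, otherwise `0`. -/
def TminusWord (i : Fin d) (w : Word d) : Tens d :=
  match w.getLast? with
  | none => 0
  | some j => if j = i then Finsupp.single w.dropLast 1 else 0

/-- The letter-removing operator `T_i^-`. -/
def Tminus (i : Fin d) (x : Tens d) : Tens d := x.sum fun w a => a • TminusWord i w

/-- The single-letter word `i` in `T(ℝ^d)`. -/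
def letterT (i : Fin d) : Tens d := Finsupp.single [i] 1

/-- Shuffle powers `x^{⧢ n}`. -/
def shufflePow (x : Tens d) : ℕ → Tens d
  | 0 => Finsupp.single [] 1
  | n + 1 => shuffle (shufflePow x n) x

/-- Shuffle product of a list of elements. -/
def shuffleList : List (Tens d) → Tens d
  | [] => Finsupp.single [] 1
  | x :: xs => shuffle x (shuffleList xs)

/-- Image of the monomial `x^t` under `φ_d`: the shuffle product of its letters. -/
def phiMon (t : Fin d →₀ ℕ) : Tens d :=
  shuffleList ((List.finRange d).map fun i => shufflePow (letterT i) (t i))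

/-- The embedding `φ_d : ℝ[x₁,…,x_d] → (T(ℝ^d), ⧢)` sending the monomial
`x_{i₁}⋯x_{i_l}` to `i₁ ⧢ ⋯ ⧢ i_l`. -/
def phi (f : MvPolynomial (Fin d) ℝ) : Tens d :=
  f.support.sum fun t => f.coeff t • phiMon t

/-- A polynomial map `p : ℝ^d → ℝ^m`, given by `m` polynomials in `d` variables. -/
abbrev PolyMap (d m : ℕ) := Fin m → MvPolynomial (Fin d) ℝ

/-- `k_p^{ij} = φ_d(∂p_i/∂x_j) ∈ T(ℝ^d)`. -/
def kP (p : PolyMap d m) (i : Fin m) (j : Fin d) : Tens d :=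
  phi (MvPolynomial.pderiv j (p i))

/-- Auxiliary: `M_p` on reversed words, so that `M_p(e) = e` and
`M_p(w∘i) = Σ_j (M_p(w) ⧢ k_p^{ij})∘j`. -/
def MpRev (p : PolyMap d m) : List (Fin m) → Tens d
  | [] => Finsupp.single [] 1
  | i :: w => ∑ j : Fin d, appendLetter j (shuffle (MpRev p w) (kP p i j))

/-- `M_p` on a word. -/
def MpWord (p : PolyMap d m) (w : Word m) : Tens d := MpRev p w.reverse

/-- The linear map `M_p : T(ℝ^m) → T(ℝ^d)`. -/
def Mp (p : PolyMap d m) (x : Tens m) : Tens d := x.sum fun w a => a • MpWord p w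

/-- `X : [0,L] → ℝ^d` is piecewise continuously differentiable: there is a partition
`0 = t₀ ≤ t₁ ≤ ⋯ ≤ t_n = L` such that `X` is `C¹` on each subinterval. -/
def PiecewiseC1 (X : ℝ → Fin d → ℝ) (L : ℝ) : Prop :=
  ∃ (n : ℕ) (t : Fin (n + 1) → ℝ), Monotone t ∧ t 0 = 0 ∧ t (Fin.last n) = L ∧
    ∀ k : Fin n, ContDiffOn ℝ 1 X (Set.Icc (t k.castSucc) (t k.succ))

/-- Iterated-integral signature coefficients, on reversed words:
`⟨σ(X|_{[0,t]}), w∘i⟩ = ∫_0^t ⟨σ(X|_{[0,r]}), w⟩ Ẋ^i_r dr`. -/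
def sigRev (X : ℝ → Fin d → ℝ) : List (Fin d) → ℝ → ℝ
  | [], _ => 1
  | i :: w, t => ∫ r in (0:ℝ)..t, sigRev X w r * deriv (fun u => X u i) r

/-- `⟨σ(X|_{[0,L]}), w⟩`, the signature coefficient of the word `w`. -/
def sigWord (X : ℝ → Fin d → ℝ) (L : ℝ) (w : Word d) : ℝ := sigRev X w.reverse L

/-- The pairing `⟨σ(X|_{[0,L]}), x⟩` for `x ∈ T(ℝ^d)`. -/
def sigT (X : ℝ → Fin d → ℝ) (L : ℝ) (x : Tens d) : ℝ :=
  x.sum fun w a => a * sigWord X L w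

/-- The transformed path `p(X) : t ↦ p(X(t))`. -/
def pPath (p : PolyMap d m) (X : ℝ → Fin d → ℝ) : ℝ → Fin m → ℝ :=
  fun t i => MvPolynomial.eval (X t) (p i)

/-- The translated polynomial map `p̃(y) = p(y + x₀) − p(x₀)`, satisfying `p̃(0) = 0`. -/
def ptilde (p : PolyMap d m) (x0 : Fin d → ℝ) : PolyMap d m := fun i =>
  MvPolynomial.aeval (fun j => MvPolynomial.X j + MvPolynomial.C (x0 j)) (p i) -
    MvPolynomial.C (MvPolynomial.eval x0 (p i))

/-- The pairing `⟨exp_∘(L·𝟙), x⟩` for `x ∈ T(ℝ¹)`: the coefficient of the word of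
length `n` in `exp_∘(L·𝟙)` is `Lⁿ/n!`. -/
def expPair (L : ℝ) (x : Tens 1) : ℝ :=
  x.sum fun w a => a * (L ^ w.length / (w.length.factorial : ℝ))

/-- The pairing `⟨σ(X) ∘ σ(Y), x⟩` of the concatenation product of two signatures with
`x ∈ T(ℝ^d)`: on a word `w` it is `Σ_{u∘v = w} ⟨σ(X), u⟩·⟨σ(Y), v⟩`. -/
def concatPair (X Y : ℝ → Fin d → ℝ) (L : ℝ) (x : Tens d) : ℝ :=
  x.sum fun w a =>
    a * ∑ k ∈ Finset.range (w.length + 1), sigWord X L (w.take k) * sigWord Y L (w.drop k)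


/-!
By the chain rule `∂_j (q_i ∘ p) = Σ_l (∂_l q_i ∘ p) · ∂_j p_l` and the multiplicativity of
`φ` (the shuffle product is commutative and associative), it suffices to show
`M_p (φ_m g) = φ_d (g ∘ p)` for every polynomial `g`. The rule
`(x∘a) ⧢ i = (x ⧢ i)∘a + x∘a∘i` gives the expansion `φ f = f(0)·e + Σ_j φ(∂_j f)∘j`.
Feeding the expansion of `φ_m g` into the defining recursion
`M_p(x∘i) = Σ_j (M_p x ⧢ k_p^{ij})∘j` and using `p(0) = 0` and the chain rule once more
produces the expansion of `φ_d (g ∘ p)`, provided the claim holds for the partial derivatives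
of `g`; so induction on the degree of `g` concludes.
-/

open MvPolynomial

def prependLetter (a : Fin d) (x : Tens d) : Tens d :=
  Finsupp.mapDomain (fun w => a :: w) x

lemma shuffleWord_nil_left (v : Word d) : shuffleWord [] v = wordT v := by
  cases v <;> simp [shuffleWord, wordT]

lemma shuffleWord_nil_right (u : Word d) : shuffleWord u [] = wordT u := by
  cases u <;> simp [shuffleWord, wordT]

lemma shuffleWord_cons_cons (a b : Fin d) (u v : Word d) :
    shuffleWord (a :: u) (b :: v) =
      prependLetter a (shuffleWord u (b :: v)) + prependLetter b (shuffleWord (a :: u) v) := by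
  rw [shuffleWord, prependLetter, prependLetter]

lemma shuffleWord_comm : ∀ u v : Word d, shuffleWord u v = shuffleWord v u
  | [], v => by rw [shuffleWord_nil_left, shuffleWord_nil_right]
  | a :: u, [] => by rw [shuffleWord_nil_left, shuffleWord_nil_right]
  | a :: u, b :: v => by
      rw [shuffleWord_cons_cons, shuffleWord_cons_cons, shuffleWord_comm u (b :: v),
        shuffleWord_comm (a :: u) v, add_comm]
  termination_by u v => u.length + v.length
  decreasing_by all_goals simp +arith

def shuffleBilin : Tens d →ₗ[ℝ] Tens d →ₗ[ℝ] Tens d :=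
  Finsupp.linearCombination ℝ fun u => Finsupp.linearCombination ℝ (shuffleWord u)

lemma shuffle_eq_shuffleBilin (x y : Tens d) : shuffle x y = shuffleBilin x y := by
  simp only [shuffle, shuffleBilin, Finsupp.linearCombination_apply, LinearMap.finsupp_sum_apply,
    LinearMap.smul_apply, Finsupp.smul_sum, mul_smul]

lemma shuffle_add_left (x y z : Tens d) : shuffle (x + y) z = shuffle x z + shuffle y z := by
  simp [shuffle_eq_shuffleBilin]

lemma shuffle_add_right (x y z : Tens d) : shuffle x (y + z) = shuffle x y + shuffle x z := by
  simp [shuffle_eq_shuffleBilin]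

lemma shuffle_smul_left (c : ℝ) (x y : Tens d) : shuffle (c • x) y = c • shuffle x y := by
  simp [shuffle_eq_shuffleBilin]

lemma shuffle_smul_right (c : ℝ) (x y : Tens d) : shuffle x (c • y) = c • shuffle x y := by
  simp [shuffle_eq_shuffleBilin]

@[simp] lemma shuffle_zero_left (y : Tens d) : shuffle 0 y = 0 := by
  simp [shuffle_eq_shuffleBilin]

@[simp] lemma shuffle_zero_right (x : Tens d) : shuffle x 0 = 0 := by
  simp [shuffle_eq_shuffleBilin]

lemma shuffle_sum_left {ι : Type*} (t : Finset ι) (f : ι → Tens d) (y : Tens d) :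
    shuffle (∑ i ∈ t, f i) y = ∑ i ∈ t, shuffle (f i) y := by
  simp [shuffle_eq_shuffleBilin]

lemma shuffle_single_single (u v : Word d) (a b : ℝ) :
    shuffle (Finsupp.single u a) (Finsupp.single v b) = (a * b) • shuffleWord u v := by
  simp [shuffle]

lemma shuffle_wordT_wordT (u v : Word d) : shuffle (wordT u) (wordT v) = shuffleWord u v := by
  rw [wordT, wordT, shuffle_single_single, one_mul, one_smul]

lemma shuffle_comm (x y : Tens d) : shuffle x y = shuffle y x := by
  unfold shuffle
  rw [Finsupp.sum_comm]
  exact Finsupp.sum_congr fun v _ => Finsupp.sum_congr fun u _ => by rw [mul_comm, shuffleWord_comm]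

@[simp] lemma shuffle_one_left (x : Tens d) : shuffle (wordT []) x = x := by
  induction x using Finsupp.induction_linear with
  | zero => simp
  | add x y hx hy => rw [shuffle_add_right, hx, hy]
  | single v b => simp [wordT, shuffle_single_single, shuffleWord_nil_left]

@[simp] lemma shuffle_one_right (x : Tens d) : shuffle x (wordT []) = x := by
  rw [shuffle_comm, shuffle_one_left]

lemma prependLetter_add (a : Fin d) (x y : Tens d) :
    prependLetter a (x + y) = prependLetter a x + prependLetter a y :=
  Finsupp.mapDomain_add

lemma prependLetter_single (a : Fin d) (w : Word d) (c : ℝ) :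
    prependLetter a (Finsupp.single w c) = Finsupp.single (a :: w) c :=
  Finsupp.mapDomain_single

lemma single_eq_smul_wordT (w : Word d) (c : ℝ) : Finsupp.single w c = c • wordT w := by
  rw [wordT, Finsupp.smul_single, smul_eq_mul, mul_one]

lemma shuffle_prependLetter_wordT_cons (a b : Fin d) (v : Word d) (x : Tens d) :
    shuffle (prependLetter a x) (wordT (b :: v)) =
      prependLetter a (shuffle x (wordT (b :: v))) +
        prependLetter b (shuffle (prependLetter a x) (wordT v)) := by
  induction x using Finsupp.induction_linear with
  | zero => simp [prependLetter]
  | add x y hx hy =>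
      simp only [prependLetter_add, shuffle_add_left, hx, hy]
      abel
  | single u c =>
      simp only [prependLetter_single, wordT, shuffle_single_single, mul_one,
        shuffleWord_cons_cons, smul_add]
      simp only [prependLetter, Finsupp.mapDomain_smul]

lemma shuffle_wordT_cons_prependLetter (a c : Fin d) (u : Word d) (y : Tens d) :
    shuffle (wordT (a :: u)) (prependLetter c y) =
      prependLetter a (shuffle (wordT u) (prependLetter c y)) +
        prependLetter c (shuffle (wordT (a :: u)) y) := by
  rw [shuffle_comm, shuffle_prependLetter_wordT_cons, shuffle_comm y, shuffle_comm (wordT u),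
    add_comm]

lemma shuffleWord_assoc : ∀ u v w : Word d,
    shuffle (shuffleWord u v) (wordT w) = shuffle (wordT u) (shuffleWord v w)
  | [], v, w => by rw [shuffleWord_nil_left, shuffle_one_left, shuffle_wordT_wordT]
  | a :: u, [], w => by rw [shuffleWord_nil_right, shuffleWord_nil_left]
  | a :: u, b :: v, [] => by
      rw [shuffleWord_nil_right, shuffle_one_right, shuffle_wordT_wordT]
  | a :: u, b :: v, c :: w => by
      have hc : prependLetter c
            (shuffle (prependLetter a (shuffleWord u (b :: v))) (wordT w)) +
          prependLetter c
            (shuffle (prependLetter b (shuffleWord (a :: u) v)) (wordT w)) =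
          prependLetter c (shuffle (wordT (a :: u)) (shuffleWord (b :: v) w)) := by
        rw [← prependLetter_add, ← shuffle_add_left, ← shuffleWord_cons_cons,
          shuffleWord_assoc (a :: u) (b :: v) w]
      rw [shuffleWord_cons_cons a b, shuffle_add_left,
        shuffle_prependLetter_wordT_cons a c, shuffle_prependLetter_wordT_cons b c,
        shuffleWord_assoc u (b :: v) (c :: w), shuffleWord_assoc (a :: u) v (c :: w),
        shuffleWord_cons_cons b c, shuffle_add_right (wordT (a :: u)),
        shuffle_wordT_cons_prependLetter a b, shuffle_wordT_cons_prependLetter a c,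
        shuffle_add_right (wordT u), prependLetter_add, ← hc]
      abel
  termination_by u v w => u.length + v.length + w.length
  decreasing_by all_goals simp +arith

lemma shuffle_assoc (x y z : Tens d) : shuffle (shuffle x y) z = shuffle x (shuffle y z) := by
  induction x using Finsupp.induction_linear with
  | zero => simp
  | add x x' hx hx' => simp only [shuffle_add_left, hx, hx']
  | single u a =>
    induction y using Finsupp.induction_linear with
    | zero => simp
    | add y y' hy hy' => simp only [shuffle_add_left, shuffle_add_right, hy, hy']
    | single v b =>
      induction z using Finsupp.induction_linear with
      | zero => simp
      | add z z' hz hz' => simp only [shuffle_add_right, hz, hz']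
      | single w c =>
        simp only [single_eq_smul_wordT, shuffle_smul_left, shuffle_smul_right,
          shuffle_wordT_wordT, shuffleWord_assoc]

lemma appendLetter_add (i : Fin d) (x y : Tens d) :
    appendLetter i (x + y) = appendLetter i x + appendLetter i y :=
  Finsupp.mapDomain_add

lemma appendLetter_smul (i : Fin d) (c : ℝ) (x : Tens d) :
    appendLetter i (c • x) = c • appendLetter i x :=
  Finsupp.mapDomain_smul _ _

@[simp] lemma appendLetter_zero (i : Fin d) : appendLetter i (0 : Tens d) = 0 :=
  Finsupp.mapDomain_zero

lemma appendLetter_single (i : Fin d) (w : Word d) (c : ℝ) :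
    appendLetter i (Finsupp.single w c) = Finsupp.single (w ++ [i]) c :=
  Finsupp.mapDomain_single

lemma appendLetter_sum {ι : Type*} (i : Fin d) (t : Finset ι) (f : ι → Tens d) :
    appendLetter i (∑ k ∈ t, f k) = ∑ k ∈ t, appendLetter i (f k) :=
  map_sum (Finsupp.mapDomain.addMonoidHom fun w => w ++ [i]) f t

lemma prependLetter_appendLetter (a i : Fin d) (x : Tens d) :
    prependLetter a (appendLetter i x) = appendLetter i (prependLetter a x) := by
  simp only [prependLetter, appendLetter, ← Finsupp.mapDomain_comp]
  rfl

lemma shuffleWord_append_singleton_singleton (a i : Fin d) :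
    ∀ w : Word d, shuffleWord (w ++ [a]) [i] =
      appendLetter a (shuffleWord w [i]) + wordT (w ++ [a, i])
  | [] => by
      rw [List.nil_append, shuffleWord_cons_cons, shuffleWord_nil_left, shuffleWord_nil_right,
        add_comm]
      simp [wordT, prependLetter_single, appendLetter_single]
  | b :: w => by
      rw [List.cons_append, shuffleWord_cons_cons, shuffleWord_append_singleton_singleton a i w,
        shuffleWord_nil_right, shuffleWord_cons_cons, shuffleWord_nil_right, appendLetter_add,
        prependLetter_add, prependLetter_appendLetter]
      simp only [wordT, prependLetter_single, appendLetter_single, List.cons_append]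
      abel

lemma shuffle_appendLetter_letterT (a i : Fin d) (x : Tens d) :
    shuffle (appendLetter a x) (letterT i) =
      appendLetter a (shuffle x (letterT i)) + appendLetter i (appendLetter a x) := by
  induction x using Finsupp.induction_linear with
  | zero => simp
  | add x y hx hy =>
      simp only [appendLetter_add, shuffle_add_left, hx, hy]
      abel
  | single w c =>
      simp only [letterT, appendLetter_single, shuffle_single_single, mul_one,
        shuffleWord_append_singleton_singleton, smul_add, appendLetter_smul,
        List.append_assoc, List.singleton_append]
      rw [single_eq_smul_wordT]

lemma shuffle_one_letterT (i : Fin d) :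
    shuffle (wordT []) (letterT i) = appendLetter i (wordT []) := by
  rw [shuffle_one_left, letterT, wordT, appendLetter_single, List.nil_append]

lemma phi_eq_sum_of_support_subset {f : MvPolynomial (Fin d) ℝ} {S : Finset (Fin d →₀ ℕ)}
    (h : f.support ⊆ S) : phi f = ∑ t ∈ S, f.coeff t • phiMon t :=
  Finset.sum_subset h fun t _ ht => by rw [notMem_support_iff.mp ht, zero_smul]

@[simp] lemma phi_zero : phi (0 : MvPolynomial (Fin d) ℝ) = 0 := by simp [phi]

lemma phi_add (f g : MvPolynomial (Fin d) ℝ) : phi (f + g) = phi f + phi g := by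
  classical
  rw [phi_eq_sum_of_support_subset support_add,
    phi_eq_sum_of_support_subset (Finset.subset_union_left (s₂ := g.support)),
    phi_eq_sum_of_support_subset (Finset.subset_union_right (s₁ := f.support)),
    ← Finset.sum_add_distrib]
  exact Finset.sum_congr rfl fun t _ => by rw [coeff_add, add_smul]

lemma phi_smul (c : ℝ) (f : MvPolynomial (Fin d) ℝ) : phi (c • f) = c • phi f := by
  rw [phi_eq_sum_of_support_subset support_smul, phi, Finset.smul_sum]
  exact Finset.sum_congr rfl fun t _ => by rw [coeff_smul, smul_eq_mul, mul_smul]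

lemma phi_sum {ι : Type*} (t : Finset ι) (f : ι → MvPolynomial (Fin d) ℝ) :
    phi (∑ i ∈ t, f i) = ∑ i ∈ t, phi (f i) :=
  map_sum (AddMonoidHom.mk' phi phi_add) f t

lemma phi_monomial (t : Fin d →₀ ℕ) (c : ℝ) : phi (monomial t c) = c • phiMon t := by
  rcases eq_or_ne c 0 with rfl | hc
  · simp [phi]
  · simp [phi, support_monomial, hc, coeff_monomial]

lemma phiMon_zero : phiMon (0 : Fin d →₀ ℕ) = wordT [] := by
  suffices ∀ l : List (Fin d), shuffleList (l.map fun _ => wordT []) = wordT [] from this _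
  intro l
  induction l with
  | nil => rfl
  | cons a l ih => rw [List.map_cons, shuffleList, ih, shuffle_one_left]

lemma phi_C (c : ℝ) : phi (C c : MvPolynomial (Fin d) ℝ) = c • wordT [] := by
  rw [C_apply, phi_monomial, phiMon_zero]

lemma shuffleList_map_update {α : Type*} [DecidableEq α] (i : α) (F : α → Tens d) (y : Tens d)
    (l : List α) (h : l.count i = 1) :
    shuffleList (l.map fun k => if k = i then shuffle (F k) y else F k) =
      shuffle (shuffleList (l.map F)) y := by
  induction l with
  | nil => simp at h
  | cons a l ih =>
      rcases eq_or_ne a i with rfl | ha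
      · have hl : a ∉ l := by
          rw [List.count_cons_self] at h
          exact List.count_eq_zero.mp (Nat.succ_injective h)
        have hmap : (l.map fun k => if k = a then shuffle (F k) y else F k) = l.map F :=
          List.map_congr_left fun k hk => if_neg fun he => hl (by rwa [he] at hk)
        rw [List.map_cons, List.map_cons, if_pos rfl, shuffleList, shuffleList, hmap,
          shuffle_assoc, shuffle_comm y, ← shuffle_assoc]
      · rw [List.count_cons_of_ne ha] at h
        rw [List.map_cons, List.map_cons, if_neg ha, shuffleList, shuffleList, ih h,
          ← shuffle_assoc]

lemma phiMon_add_single (t : Fin d →₀ ℕ) (i : Fin d) :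
    phiMon (t + Finsupp.single i 1) = shuffle (phiMon t) (letterT i) := by
  classical
  have hpow : ∀ k, shufflePow (letterT k) ((t + Finsupp.single i 1 : Fin d →₀ ℕ) k) =
      if k = i then shuffle (shufflePow (letterT k) (t k)) (letterT i)
      else shufflePow (letterT k) (t k) := by
    intro k
    rcases eq_or_ne k i with rfl | hk
    · rw [if_pos rfl, Finsupp.add_apply, Finsupp.single_eq_same, shufflePow]
    · rw [if_neg hk, Finsupp.add_apply, Finsupp.single_eq_of_ne' (Ne.symm hk), add_zero]
  rw [phiMon, phiMon, List.map_congr_left fun k _ => hpow k]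
  exact shuffleList_map_update i _ (letterT i) (List.finRange d)
    (List.count_eq_one_of_mem (List.nodup_finRange d) (List.mem_finRange i))

lemma phi_mul_X (f : MvPolynomial (Fin d) ℝ) (i : Fin d) :
    phi (f * X i) = shuffle (phi f) (letterT i) := by
  induction f using MvPolynomial.induction_on' with
  | monomial t c =>
      rw [X, monomial_mul, mul_one, phi_monomial, phi_monomial, phiMon_add_single,
        shuffle_smul_left]
  | add f g hf hg => rw [add_mul, phi_add, phi_add, hf, hg, shuffle_add_left]

lemma phi_mul (f g : MvPolynomial (Fin d) ℝ) : phi (f * g) = shuffle (phi f) (phi g) := by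
  induction g using MvPolynomial.induction_on generalizing f with
  | C c => rw [mul_comm, ← smul_eq_C_mul, phi_smul, phi_C, shuffle_smul_right, shuffle_one_right]
  | add g g' hg hg' => rw [mul_add, phi_add, hg, hg', phi_add, shuffle_add_right]
  | mul_X g i hg => rw [← mul_assoc, phi_mul_X, hg, phi_mul_X, shuffle_assoc]

lemma phi_eq_eval_zero_add_sum (f : MvPolynomial (Fin d) ℝ) :
    phi f = eval 0 f • wordT [] + ∑ j, appendLetter j (phi (pderiv j f)) := by
  induction f using MvPolynomial.induction_on with
  | C c => simp [phi_C]
  | add f g hf hg =>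
      simp only [phi_add, map_add, add_smul, appendLetter_add, Finset.sum_add_distrib, hf, hg]
      abel
  | mul_X f i hf =>
      have hderiv : ∀ j, phi (pderiv j (f * X i)) =
          shuffle (phi (pderiv j f)) (letterT i) + if j = i then phi f else 0 := by
        intro j
        rw [pderiv_mul, phi_add, phi_mul_X]
        rcases eq_or_ne j i with rfl | hji
        · rw [pderiv_X_self, mul_one, if_pos rfl]
        · rw [pderiv_X_of_ne hji.symm, mul_zero, phi_zero, if_neg hji]
      rw [phi_mul_X, hf, shuffle_add_left, shuffle_smul_left, shuffle_one_letterT,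
        shuffle_sum_left]
      simp only [shuffle_appendLetter_letterT, hderiv, appendLetter_add, Finset.sum_add_distrib,
        apply_ite (appendLetter _), appendLetter_zero, Finset.sum_ite_eq', Finset.mem_univ, if_true,
        map_mul, eval_X, Pi.zero_apply, mul_zero, zero_smul, zero_add, hf, appendLetter_smul,
        appendLetter_sum]
      abel

section Polynomial

variable {σ τ R : Type*} [CommSemiring R]

lemma totalDegree_pderiv_le_pred (i : σ) (g : MvPolynomial σ R) :
    (pderiv i g).totalDegree ≤ g.totalDegree - 1 := by
  classical
  conv_lhs => rw [g.as_sum, map_sum]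
  refine totalDegree_finsetSum_le fun t ht => ?_
  rw [pderiv_monomial]
  rcases eq_or_ne (t i) 0 with h0 | h0
  · simp [h0]
  · have hle : Finsupp.single i 1 ≤ t :=
      Finsupp.single_le_iff.mpr (Nat.one_le_iff_ne_zero.mpr h0)
    have hdeg : (t - Finsupp.single i 1).degree + 1 = t.degree := by
      conv_rhs => rw [← tsub_add_cancel_of_le hle, map_add, Finsupp.degree_single]
    have ht : t.degree ≤ g.totalDegree := le_totalDegree ht
    exact (totalDegree_monomial_le _ _).trans (by change (t - _).degree ≤ _; omega)

lemma totalDegree_pderiv_lt {i : σ} {g : MvPolynomial σ R} (h : pderiv i g ≠ 0) :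
    (pderiv i g).totalDegree < g.totalDegree := by
  have hg : g.totalDegree ≠ 0 := fun h0 =>
    h (by rw [totalDegree_eq_zero_iff_eq_C.mp h0, pderiv_C])
  have := totalDegree_pderiv_le_pred i g
  omega

lemma eval_zero_bind₁ {p : σ → MvPolynomial τ R} (hp : ∀ i, eval 0 (p i) = 0)
    (g : MvPolynomial σ R) : eval 0 (bind₁ p g) = eval 0 g := by
  change aeval 0 (bind₁ p g) = aeval 0 g
  rw [aeval_bind₁]
  exact congrArg (aeval · g) (funext hp)

lemma pderiv_bind₁ [Fintype σ] (p : σ → MvPolynomial τ R) (g : MvPolynomial σ R) (j : τ) :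
    pderiv j (bind₁ p g) = ∑ i, bind₁ p (pderiv i g) * pderiv j (p i) := by
  induction g using MvPolynomial.induction_on with
  | C c => simp
  | add f g hf hg => simp only [map_add, hf, hg, add_mul, Finset.sum_add_distrib]
  | mul_X f i hf =>
      classical
      simp only [map_mul, bind₁_X_right, pderiv_mul, hf, pderiv_X, map_add, add_mul,
        Finset.sum_add_distrib, Finset.sum_mul]
      simp [Pi.single_apply, apply_ite (bind₁ p), mul_right_comm _ (p i)]

end Polynomial

section Mp

variable (p : PolyMap d m)

lemma Mp_eq_linearCombination (x : Tens m) :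
    Mp p x = Finsupp.linearCombination ℝ (MpWord p) x :=
  (Finsupp.linearCombination_apply ℝ x).symm

lemma Mp_add (x y : Tens m) : Mp p (x + y) = Mp p x + Mp p y := by
  simp [Mp_eq_linearCombination]

lemma Mp_smul (c : ℝ) (x : Tens m) : Mp p (c • x) = c • Mp p x := by
  simp [Mp_eq_linearCombination]

lemma Mp_sum {ι : Type*} (t : Finset ι) (f : ι → Tens m) :
    Mp p (∑ k ∈ t, f k) = ∑ k ∈ t, Mp p (f k) := by
  simp [Mp_eq_linearCombination]

lemma Mp_single (w : Word m) (c : ℝ) : Mp p (Finsupp.single w c) = c • MpWord p w := by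
  simp [Mp_eq_linearCombination]

@[simp] lemma Mp_zero : Mp p (0 : Tens m) = 0 := by
  simp [Mp_eq_linearCombination]

@[simp] lemma Mp_one : Mp p (wordT []) = wordT [] := by
  rw [wordT, Mp_single, one_smul]
  rfl

lemma MpWord_append_singleton (w : Word m) (i : Fin m) :
    MpWord p (w ++ [i]) = ∑ j, appendLetter j (shuffle (MpWord p w) (kP p i j)) := by
  rw [MpWord, MpWord, List.reverse_concat, MpRev]

lemma Mp_appendLetter (i : Fin m) (x : Tens m) :
    Mp p (appendLetter i x) = ∑ j, appendLetter j (shuffle (Mp p x) (kP p i j)) := by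
  induction x using Finsupp.induction_linear with
  | zero => simp
  | add x y hx hy =>
      simp only [appendLetter_add, Mp_add, hx, hy, shuffle_add_left, ← Finset.sum_add_distrib]
  | single w c =>
      simp only [appendLetter_single, Mp_single, MpWord_append_singleton, Finset.smul_sum,
        shuffle_smul_left, appendLetter_smul]

lemma Mp_phi_of_pderiv (hp : ∀ i, eval 0 (p i) = 0) (g : MvPolynomial (Fin m) ℝ)
    (h : ∀ i, Mp p (phi (pderiv i g)) = phi (bind₁ p (pderiv i g))) :
    Mp p (phi g) = phi (bind₁ p g) := by
  rw [phi_eq_eval_zero_add_sum g, phi_eq_eval_zero_add_sum (bind₁ p g), eval_zero_bind₁ hp,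
    Mp_add, Mp_smul, Mp_one, Mp_sum]
  simp only [Mp_appendLetter, h]
  rw [Finset.sum_comm]
  congr 1
  refine Finset.sum_congr rfl fun j _ => ?_
  rw [pderiv_bind₁, phi_sum, appendLetter_sum]
  simp only [phi_mul, kP]

lemma Mp_phi (hp : ∀ i, eval 0 (p i) = 0) (g : MvPolynomial (Fin m) ℝ) :
    Mp p (phi g) = phi (bind₁ p g) := by
  induction hn : g.totalDegree using Nat.strong_induction_on generalizing g with
  | _ n ih =>
    refine Mp_phi_of_pderiv p hp g fun i => ?_
    by_cases h0 : pderiv i g = 0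
    · simp [h0]
    · exact ih _ (hn ▸ totalDegree_pderiv_lt h0) _ rfl

end Mp

theorem kP_comp_general (d m s : ℕ) (p : PolyMap d m) (q : PolyMap m s)
    (hp : ∀ i, MvPolynomial.eval (0 : Fin d → ℝ) (p i) = 0) :
    ∀ (i : Fin s) (j : Fin d),
      kP (fun l => MvPolynomial.bind₁ p (q l)) i j =
        ∑ l : Fin m, shuffle (Mp p (kP q i l)) (kP p l j) := by
  intro i j
  rw [kP, pderiv_bind₁, phi_sum]
  exact Finset.sum_congr rfl fun l _ => by rw [phi_mul, kP, kP, Mp_phi p hp]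

/-- For polynomial maps `p : ℝ^d → ℝ^m` and `q : ℝ^m → ℝ^s` with
`p(0) = 0` and `q(0) = 0`, `k_{q∘p}^{ij} = Σ_{l=1}^m M_p(k_q^{il}) ⧢ k_p^{lj}`. -/
theorem kP_comp (d m s : ℕ) (p : PolyMap d m) (q : PolyMap m s)
    (hp : ∀ i, MvPolynomial.eval (0 : Fin d → ℝ) (p i) = 0)
    (hq : ∀ i, MvPolynomial.eval (0 : Fin m → ℝ) (q i) = 0) :
    ∀ (i : Fin s) (j : Fin d),
      kP (fun l => MvPolynomial.bind₁ p (q l)) i j =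
        ∑ l : Fin m, shuffle (Mp p (kP q i l)) (kP p l j) :=
  kP_comp_general d m s p q hp

end SigPaper
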